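/- (Conditional Borel–Cantelli, limsup version.) Let (Ω̃, P̃, 𝒢, (𝒢_t)_{t≥0}) be a filtered probability space. Suppose there exist a decreasing sequence (t_n)_{n≥1} with t_n → 0 and events (A_n)_{n≥1} such that: (Z1) A_n ∈ 𝒢_{t_n} for all n; (Z2) there exist nonnegative numbers (a_n) with Σ a_n = ∞, events (G_n), and p₁ ∈ (0,1) such that P̃(G_nᶜ) ≤ p₁ and P̃(A_n | 𝒢_{t_{n+1}}) ≥ a_n·1_{G_n} almost surely, for all n. Then P̃(limsup_n A_n) ≥ 1 - p₁. -/

import Mathlib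

/-!
Write `D` for the event that none of `A (N+1), …, A (N+k)` occurs. It lies in `𝒢 (t (N+1))`, so
integrating the hypothesis on the conditional probability of `A N` over `D` gives
`P(A N ∩ D) ≥ a N * P(G N ∩ D) ≥ a N * (P(D) - p₁)`; that is, adding `(A N)ᶜ` to `D` shrinks the
excess `P(D) - p₁` by the factor `1 - a N` (note `a N ≤ 1` since `G N` is not null). Iterating,
`P(⋂_{N ≤ n ≤ N+k} (A n)ᶜ) ≤ p₁ + ∏ (1 - a n)`, and the product tends to `0` because `∑ a n = ∞`.
So `P(⋂_{n ≥ N} (A n)ᶜ) ≤ p₁` for every `N`, and the complement of `limsup A` is the increasing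
union of these events.
-/

open MeasureTheory Filter Finset
open scoped ENNReal Topology

theorem tendsto_prod_range_one_sub_of_not_summable {a : ℕ → ℝ} (ha₀ : ∀ n, 0 ≤ a n)
    (ha₁ : ∀ n, a n ≤ 1) (ha : ¬ Summable a) :
    Tendsto (fun k => ∏ i ∈ range k, (1 - a i)) atTop (𝓝 0) := by
  have hsum : Tendsto (fun k => ∑ i ∈ range k, a i) atTop atTop :=
    (not_summable_iff_tendsto_nat_atTop_of_nonneg ha₀).1 ha
  refine squeeze_zero (fun k => prod_nonneg fun i _ => sub_nonneg.2 (ha₁ i)) (fun k => ?_)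
    (Real.tendsto_exp_atBot.comp (tendsto_neg_atTop_atBot.comp hsum))
  calc ∏ i ∈ range k, (1 - a i)
      ≤ ∏ i ∈ range k, Real.exp (-a i) :=
        prod_le_prod (fun i _ => sub_nonneg.2 (ha₁ i)) fun i _ => Real.one_sub_le_exp_neg _
    _ = Real.exp (-∑ i ∈ range k, a i) := by rw [← Real.exp_sum, sum_neg_distrib]

namespace MeasureTheory

variable {Ω : Type*} {m m0 : MeasurableSpace Ω} {μ : Measure Ω}

section Event

variable {A G D : Set Ω} {a : ℝ}

theorem le_one_of_ae_mul_indicator_le_condExp [IsFiniteMeasure μ] (hm : m ≤ m0)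
    (hA : MeasurableSet A) (hG : μ G ≠ 0)
    (h : ∀ᵐ ω ∂μ, a * G.indicator 1 ω ≤ μ[A.indicator 1 | m] ω) : a ≤ 1 := by
  have hle : μ[A.indicator 1 | m] ≤ᵐ[μ] fun _ => (1 : ℝ) := by
    have := condExp_mono (m := m) ((integrable_const (1 : ℝ)).indicator hA) (integrable_const 1)
      (ae_of_all μ (Set.indicator_le_self' fun _ _ => zero_le_one))
    rwa [condExp_const hm] at this
  by_contra! ha
  refine hG (measure_eq_zero_iff_ae_notMem.2 ?_)
  filter_upwards [h, hle] with ω hω hω1 hωG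
  simp only [Set.indicator_of_mem hωG, Pi.one_apply, mul_one] at hω
  linarith

theorem mul_measureReal_inter_le_of_ae_le_condExp [IsFiniteMeasure μ] (hm : m ≤ m0)
    (hA : MeasurableSet A) (hG : MeasurableSet G) (hD : MeasurableSet[m] D)
    (h : ∀ᵐ ω ∂μ, a * G.indicator 1 ω ≤ μ[A.indicator 1 | m] ω) :
    a * μ.real (G ∩ D) ≤ μ.real (A ∩ D) :=
  calc a * μ.real (G ∩ D)
      = ∫ ω in D, a * G.indicator 1 ω ∂μ := by
        rw [integral_const_mul, integral_indicator_one hG, measureReal_restrict_apply hG]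
    _ ≤ ∫ ω in D, μ[A.indicator 1 | m] ω ∂μ :=
        integral_mono_ae (((integrable_const 1).indicator hG).const_mul a).restrict
          integrable_condExp.restrict (ae_restrict_of_ae h)
    _ = ∫ ω in D, A.indicator 1 ω ∂μ :=
        setIntegral_condExp hm ((integrable_const 1).indicator hA) hD
    _ = μ.real (A ∩ D) := by rw [integral_indicator_one hA, measureReal_restrict_apply hA]

theorem measureReal_compl_inter_le_of_ae_le_condExp [IsFiniteMeasure μ] (hm : m ≤ m0)
    (hA : MeasurableSet A) (hG : MeasurableSet G) (hD : MeasurableSet[m] D) {p : ℝ} (ha : 0 ≤ a)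
    (hGp : μ.real Gᶜ ≤ p) (h : ∀ᵐ ω ∂μ, a * G.indicator 1 ω ≤ μ[A.indicator 1 | m] ω) :
    μ.real (Aᶜ ∩ D) ≤ (1 - a) * μ.real D + a * p := by
  have hsplit : μ.real (A ∩ D) + μ.real (Aᶜ ∩ D) = μ.real D := by
    rw [Set.inter_comm A, Set.inter_comm Aᶜ, ← Set.sdiff_eq, measureReal_inter_add_sdiff hA]
  have hcover : μ.real D ≤ μ.real (G ∩ D) + p := by
    calc μ.real D ≤ μ.real ((G ∩ D) ∪ Gᶜ) :=
          measureReal_mono fun ω hω => by by_cases hωG : ω ∈ G <;> simp [hωG, hω]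
      _ ≤ μ.real (G ∩ D) + μ.real Gᶜ := measureReal_union_le _ _
      _ ≤ μ.real (G ∩ D) + p := by gcongr
  have := mul_measureReal_inter_le_of_ae_le_condExp hm hA hG hD h
  nlinarith

end Event

theorem measure_liminf_atTop_le {s : ℕ → Set Ω} {c : ℝ≥0∞} (h : ∀ N, μ (⋂ n ≥ N, s n) ≤ c) :
    μ (liminf s atTop) ≤ c := by
  have hmono : Monotone fun N => ⋂ n ≥ N, s n := fun N M hNM =>
    Set.biInter_mono (fun n hn => hNM.trans hn) fun _ _ => le_rfl
  rw [liminf_eq_iSup_iInf_of_nat]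
  simp only [Set.iSup_eq_iUnion, Set.iInf_eq_iInter]
  rw [hmono.measure_iUnion]
  exact iSup_le h

/-- The event that none of `A N, …, A (N + k - 1)` occurs. -/
def noneOccur (A : ℕ → Set Ω) : ℕ → ℕ → Set Ω
  | _, 0 => Set.univ
  | N, k + 1 => (A N)ᶜ ∩ noneOccur A (N + 1) k

theorem iInter_compl_subset_noneOccur (A : ℕ → Set Ω) (N k : ℕ) :
    ⋂ n ≥ N, (A n)ᶜ ⊆ noneOccur A N k := by
  induction k generalizing N with
  | zero => exact Set.subset_univ _
  | succ k ih =>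
    intro ω hω
    rw [Set.mem_iInter₂] at hω
    exact ⟨hω N le_rfl, ih (N + 1) (Set.mem_iInter₂.2 fun n hn => hω n (Nat.le_of_succ_le hn))⟩

section ReverseFiltration

variable {ℱ : ℕ → MeasurableSpace Ω} {A G : ℕ → Set Ω} {a : ℕ → ℝ} {p : ℝ}

theorem measurableSet_noneOccur (hℱ : Antitone ℱ) (hA : ∀ n, MeasurableSet[ℱ n] (A n))
    (N k : ℕ) : MeasurableSet[ℱ N] (noneOccur A N k) := by
  induction k generalizing N with
  | zero => exact MeasurableSet.univ
  | succ k ih => exact (hA N).compl.inter (hℱ (Nat.le_succ N) _ (ih (N + 1)))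

theorem measureReal_noneOccur_le [IsProbabilityMeasure μ] (hℱ : Antitone ℱ)
    (hℱm : ∀ n, ℱ n ≤ m0) (hA : ∀ n, MeasurableSet[ℱ n] (A n)) (hG : ∀ n, MeasurableSet (G n))
    (ha₀ : ∀ n, 0 ≤ a n) (ha₁ : ∀ n, a n ≤ 1) (hp : 0 ≤ p) (hGp : ∀ n, μ.real (G n)ᶜ ≤ p)
    (hcond : ∀ n, ∀ᵐ ω ∂μ, a n * (G n).indicator 1 ω ≤ μ[(A n).indicator 1 | ℱ (n + 1)] ω)
    (N k : ℕ) : μ.real (noneOccur A N k) ≤ p + ∏ i ∈ range k, (1 - a (i + N)) := by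
  induction k generalizing N with
  | zero => simp [noneOccur, hp]
  | succ k ih =>
    have hstep := measureReal_compl_inter_le_of_ae_le_condExp (hℱm (N + 1)) (hℱm N _ (hA N))
      (hG N) (measurableSet_noneOccur hℱ hA (N + 1) k) (ha₀ N) (hGp N) (hcond N)
    have hprod : ∏ i ∈ range (k + 1), (1 - a (i + N))
        = (∏ i ∈ range k, (1 - a (i + (N + 1)))) * (1 - a N) := by
      simp only [prod_range_succ', zero_add, add_right_comm _ 1 N, add_assoc]
    calc μ.real (noneOccur A N (k + 1))
        ≤ (1 - a N) * μ.real (noneOccur A (N + 1) k) + a N * p := hstep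
      _ ≤ (1 - a N) * (p + ∏ i ∈ range k, (1 - a (i + (N + 1)))) + a N * p := by
        gcongr
        · linarith [ha₁ N]
        · exact ih (N + 1)
      _ = p + ∏ i ∈ range (k + 1), (1 - a (i + N)) := by rw [hprod]; ring

theorem measureReal_iInter_compl_le [IsProbabilityMeasure μ] (hℱ : Antitone ℱ)
    (hℱm : ∀ n, ℱ n ≤ m0) (hA : ∀ n, MeasurableSet[ℱ n] (A n)) (hG : ∀ n, MeasurableSet (G n))
    (ha₀ : ∀ n, 0 ≤ a n) (ha₁ : ∀ n, a n ≤ 1) (ha : ¬ Summable a) (hp : 0 ≤ p)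
    (hGp : ∀ n, μ.real (G n)ᶜ ≤ p)
    (hcond : ∀ n, ∀ᵐ ω ∂μ, a n * (G n).indicator 1 ω ≤ μ[(A n).indicator 1 | ℱ (n + 1)] ω)
    (N : ℕ) : μ.real (⋂ n ≥ N, (A n)ᶜ) ≤ p := by
  have hprod := tendsto_prod_range_one_sub_of_not_summable (fun i => ha₀ (i + N))
    (fun i => ha₁ (i + N)) ((summable_nat_add_iff N).not.2 ha)
  refine ge_of_tendsto (by simpa using tendsto_const_nhds.add hprod) (.of_forall fun k => ?_)
  exact (measureReal_mono (iInter_compl_subset_noneOccur A N k)).trans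
    (measureReal_noneOccur_le hℱ hℱm hA hG ha₀ ha₁ hp hGp hcond N k)

theorem ofReal_one_sub_le_measure_limsup [IsProbabilityMeasure μ] (hℱ : Antitone ℱ)
    (hℱm : ∀ n, ℱ n ≤ m0) (hA : ∀ n, MeasurableSet[ℱ n] (A n)) (hG : ∀ n, MeasurableSet (G n))
    (ha₀ : ∀ n, 0 ≤ a n) (ha : ¬ Summable a) (hp : 0 ≤ p) (hp₁ : p < 1)
    (hGp : ∀ n, μ.real (G n)ᶜ ≤ p)
    (hcond : ∀ n, ∀ᵐ ω ∂μ, a n * (G n).indicator 1 ω ≤ μ[(A n).indicator 1 | ℱ (n + 1)] ω) :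
    ENNReal.ofReal (1 - p) ≤ μ (limsup A atTop) := by
  have hA' n : MeasurableSet (A n) := hℱm n _ (hA n)
  have hG_ne n : μ (G n) ≠ 0 := fun h0 => by
    have := hGp n
    rw [probReal_compl_eq_one_sub (hG n), (measureReal_eq_zero_iff).2 h0] at this
    linarith
  have ha₁ n : a n ≤ 1 :=
    le_one_of_ae_mul_indicator_le_condExp (hℱm _) (hA' n) (hG_ne n) (hcond n)
  have htail N : μ (⋂ n ≥ N, (A n)ᶜ) ≤ ENNReal.ofReal p := by
    rw [← ofReal_measureReal]
    exact ENNReal.ofReal_le_ofReal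
      (measureReal_iInter_compl_le hℱ hℱm hA hG ha₀ ha₁ ha hp hGp hcond N)
  have hcompl := ENNReal.toReal_le_of_le_ofReal hp
    (limsup_compl (u := A) atTop ▸ measure_liminf_atTop_le htail)
  rw [← measureReal_def, probReal_compl_eq_one_sub (.measurableSet_limsup hA')] at hcompl
  exact ENNReal.ofReal_le_of_le_toReal (show 1 - p ≤ μ.real _ by linarith)

end ReverseFiltration

end MeasureTheory

theorem conditional_borel_cantelli_limsup_general
    {Ω : Type*} {m0 : MeasurableSpace Ω} (μ : Measure Ω) [IsProbabilityMeasure μ]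
    (𝒢 : Filtration ℝ m0)
    (t : ℕ → ℝ) (ht_anti : StrictAnti t)
    (A G : ℕ → Set Ω) (a : ℕ → ℝ) (p₁ : ℝ) (hp₁ : 0 < p₁) (hp₁' : p₁ < 1)
    (hA : ∀ n, MeasurableSet[𝒢 (t n)] (A n))
    (hG : ∀ n, MeasurableSet (G n))
    (ha_nonneg : ∀ n, 0 ≤ a n)
    (ha_sum : ¬ Summable a)
    (hGp : ∀ n, μ (G n)ᶜ ≤ ENNReal.ofReal p₁)
    (hcond : ∀ n, ∀ᵐ ω ∂μ,
      a n * (G n).indicator (fun _ => (1:ℝ)) ω ≤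
        (μ[(A n).indicator (fun _ => (1:ℝ)) | 𝒢 (t (n+1))]) ω) :
    ENNReal.ofReal (1 - p₁) ≤ μ (limsup A atTop) :=
  ofReal_one_sub_le_measure_limsup (ℱ := fun n => 𝒢 (t n))
    (fun _ _ h => 𝒢.mono (ht_anti.antitone h)) (fun _ => 𝒢.le _) hA hG ha_nonneg ha_sum hp₁.le
    hp₁' (fun n => ENNReal.toReal_le_of_le_ofReal hp₁.le (hGp n)) hcond

/-- Conditional Borel–Cantelli lemma (Proposition 5.1(i)): on a filtered probability space,
if `t_n` decreases to `0`, `A_n ∈ 𝒢_{t_n}`, the nonnegative `a_n` satisfy `Σ a_n = ∞`,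
`P(G_nᶜ) ≤ p₁` and `P(A_n | 𝒢_{t_{n+1}}) ≥ a_n·1_{G_n}` a.s., then
`P(limsup A_n) ≥ 1 - p₁`. -/
theorem conditional_borel_cantelli_limsup
    {Ω : Type*} {m0 : MeasurableSpace Ω} (μ : Measure Ω) [IsProbabilityMeasure μ]
    (𝒢 : Filtration ℝ m0)
    (t : ℕ → ℝ) (ht_anti : StrictAnti t) (ht_lim : Tendsto t atTop (nhds 0))
    (A G : ℕ → Set Ω) (a : ℕ → ℝ) (p₁ : ℝ) (hp₁ : 0 < p₁) (hp₁' : p₁ < 1)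
    (hA : ∀ n, MeasurableSet[𝒢 (t n)] (A n))
    (hG : ∀ n, MeasurableSet (G n))
    (ha_nonneg : ∀ n, 0 ≤ a n)
    (ha_sum : ¬ Summable a)
    (hGp : ∀ n, μ (G n)ᶜ ≤ ENNReal.ofReal p₁)
    (hcond : ∀ n, ∀ᵐ ω ∂μ,
      a n * (G n).indicator (fun _ => (1:ℝ)) ω ≤
        (μ[(A n).indicator (fun _ => (1:ℝ)) | 𝒢 (t (n+1))]) ω) :
    ENNReal.ofReal (1 - p₁) ≤ μ (limsup A atTop) :=
  conditional_borel_cantelli_limsup_general μ 𝒢 t ht_anti A G a p₁ hp₁ hp₁' hA hG ha_nonneg ha_sum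
    hGp hcond
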